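/- The master-formula λ-bracket is skewsymmetric, i.e. B_{−T}(g,f) = −S^{−T}(B_T(f,g)) for all f, g ∈ A and all T ∈ ℤ^D, if and only if the skewsymmetry condition holds on generators, i.e. P^{ji}_{−T} = −S^{−T}(P^{ij}_T) for all i, j ∈ {1,…,ℓ} and all T ∈ ℤ^D. -/

import Mathlib

/-!
Both brackets are finite sums over `(i, j, M, N)` of the master-formula terms.
Skewsymmetry of `P` turns the `(i, j, M, N)` term of `B_{-T}(g, f)` into minus `S^{-T}` of
the `(j, i, N, M)` term of `B_T(f, g)`, so the two sums agree after reindexing. Conversely,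
`B_T(u^i_0, u^j_0) = P^{ji}_T`, so skewsymmetry of the bracket on generators is that of `P`.
-/

open MvPolynomial

namespace MPVA

/-- The algebra of difference polynomials in `ℓ` generators on a `D`-dimensional lattice:
polynomials over `ℂ` in the variables `u^i_N`, `i ∈ Fin ℓ`, `N ∈ ℤ^D`. -/
abbrev A (ℓ D : ℕ) := MvPolynomial (Fin ℓ × (Fin D → ℤ)) ℂ

variable {ℓ D : ℕ}

/-- The shift automorphism `S^M` sending `u^i_N` to `u^i_{N+M}`. -/
noncomputable def Sh (M : Fin D → ℤ) : A ℓ D ≃ₐ[ℂ] A ℓ D :=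
  renameEquiv ℂ ((Equiv.refl (Fin ℓ)).prodCongr (Equiv.addRight M))

/-- The `α`-th standard basis vector `E_α ∈ ℤ^D`. -/
def E (α : Fin D) : Fin D → ℤ := fun β => if β = α then 1 else 0

/-- Coefficient `B_T(f,g)` of `λ^T` in the master-formula λ-bracket `{f_λ g}` determined
by the generator coefficients `{u^i_λ u^j} = Σ_T (P j i T)·λ^T`:
`{f_λ g} = Σ_{i,j,M,N,T'} (∂g/∂u^j_N)·S^N(P^{ji}_{T'})·S^{N+T'−M}(∂f/∂u^i_M)·λ^{N+T'−M}`. -/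
noncomputable def B (P : Fin ℓ → Fin ℓ → (Fin D → ℤ) → A ℓ D)
    (T : Fin D → ℤ) (f g : A ℓ D) : A ℓ D :=
  ∑ᶠ (i : Fin ℓ) (j : Fin ℓ) (M : Fin D → ℤ) (N : Fin D → ℤ),
    (pderiv (j, N) g) * (Sh N (P j i (T - N + M))) * (Sh T (pderiv (i, M) f))

/-- The family of generator coefficients has only finitely many nonzero members. -/
def FinSupp (P : Fin ℓ → Fin ℓ → (Fin D → ℤ) → A ℓ D) : Prop :=
  {x : (Fin ℓ × Fin ℓ) × (Fin D → ℤ) | P x.1.1 x.1.2 x.2 ≠ 0}.Finite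

/-- The PVA-Jacobi identity for the triple `(f,g,h)`, written coefficient-wise
(for all `T, U ∈ ℤ^D`, the coefficient of `λ^T μ^U` in
`Σ_U {f_λ B_U(g,h)}μ^U − Σ_T {g_μ B_T(f,h)}λ^T = Σ_{T,U} B_U(B_T(f,g),h)λ^{T+U}μ^U`). -/
def Jacobi (P : Fin ℓ → Fin ℓ → (Fin D → ℤ) → A ℓ D) (f g h : A ℓ D) : Prop :=
  ∀ T U : Fin D → ℤ,
    B P T f (B P U g h) - B P U g (B P T f h) = B P U (B P (T - U) f g) h

lemma Sh_apply (M : Fin D → ℤ) (p : A ℓ D) :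
    Sh M p = rename (fun v : Fin ℓ × (Fin D → ℤ) => (v.1, v.2 + M)) p := rfl

lemma Sh_Sh (M N : Fin D → ℤ) (p : A ℓ D) : Sh M (Sh N p) = Sh (N + M) p := by
  simp only [Sh_apply, rename_rename]
  congr 2
  funext v
  simp [add_assoc]

@[simp]
lemma Sh_zero (p : A ℓ D) : Sh (0 : Fin D → ℤ) p = p := by
  simp only [Sh_apply, add_zero]
  exact rename_id_apply p

lemma finsum_finsum_eq_sum_sum {α β R : Type*} [AddCommMonoid R] (G : α → β → R)
    (s : Finset α) (t : Finset β) (h : ∀ a b, G a b ≠ 0 → a ∈ s ∧ b ∈ t) :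
    ∑ᶠ (a) (b), G a b = ∑ a ∈ s, ∑ b ∈ t, G a b := by
  rw [finsum_eq_finsetSum_of_support_subset _ (s := s)]
  · exact Finset.sum_congr rfl fun a _ =>
      finsum_eq_finsetSum_of_support_subset _ fun b hb => (h a b hb).2
  · intro a ha
    by_contra has
    exact ha (finsum_eq_zero_of_forall_eq_zero fun b => by_contra fun hb => has (h a b hb).1)

noncomputable def shiftSupport (f : A ℓ D) : Finset (Fin D → ℤ) := by
  classical exact f.vars.image Prod.snd

lemma mem_shiftSupport_of_pderiv_ne_zero (f : A ℓ D) (i : Fin ℓ) (M : Fin D → ℤ)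
    (h : pderiv (i, M) f ≠ 0) : M ∈ shiftSupport f := by
  classical
  refine Finset.mem_image.2 ⟨(i, M), ?_, rfl⟩
  by_contra hv
  exact h (pderiv_eq_zero_of_notMem_vars hv)

lemma B_eq_sum (P : Fin ℓ → Fin ℓ → (Fin D → ℤ) → A ℓ D) (T : Fin D → ℤ) (f g : A ℓ D)
    (s t : Finset (Fin D → ℤ))
    (hs : ∀ i M, pderiv (i, M) f ≠ 0 → M ∈ s) (ht : ∀ j N, pderiv (j, N) g ≠ 0 → N ∈ t) :
    B P T f g = ∑ i, ∑ j, ∑ M ∈ s, ∑ N ∈ t,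
      pderiv (j, N) g * Sh N (P j i (T - N + M)) * Sh T (pderiv (i, M) f) := by
  simp only [B, finsum_eq_sum_of_fintype]
  refine Finset.sum_congr rfl fun i _ => Finset.sum_congr rfl fun j _ => ?_
  refine finsum_finsum_eq_sum_sum _ _ _ fun M N hMN => ⟨hs i M ?_, ht j N ?_⟩ <;>
    rintro h0 <;> simp [h0] at hMN

lemma B_X_zero (P : Fin ℓ → Fin ℓ → (Fin D → ℤ) → A ℓ D) (a b : Fin ℓ) (T : Fin D → ℤ) :
    B P T (X (a, 0)) (X (b, 0)) = P b a T := by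
  classical
  rw [B_eq_sum P T _ _ {0} {0}] <;> simp [Pi.single_apply]

lemma summand_skew (P : Fin ℓ → Fin ℓ → (Fin D → ℤ) → A ℓ D)
    (hP : ∀ i j T, P j i (-T) = -Sh (-T) (P i j T))
    (a c : Fin ℓ) (T M N : Fin D → ℤ) (x y : A ℓ D) :
    x * Sh M (P a c (-T - M + N)) * Sh (-T) y
      = -Sh (-T) (y * Sh N (P c a (T - N + M)) * Sh T x) := by
  have hT : -T - M + N = -(T - N + M) := by abel
  rw [hT, hP, map_neg, Sh_Sh, map_mul, map_mul, Sh_Sh, Sh_Sh, add_neg_cancel, Sh_zero,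
    show -(T - N + M) + M = N + -T by abel]
  ring

theorem master_skewsymmetric_iff_general (ℓ D : ℕ) (P : Fin ℓ → Fin ℓ → (Fin D → ℤ) → A ℓ D) :
    (∀ (f g : A ℓ D) (T : Fin D → ℤ), B P (-T) g f = - Sh (-T) (B P T f g)) ↔
    (∀ (i j : Fin ℓ) (T : Fin D → ℤ), P j i (-T) = - Sh (-T) (P i j T)) := by
  constructor
  · intro h i j T
    simpa only [B_X_zero] using h (X (j, 0)) (X (i, 0)) T
  · intro h f g T
    have hf := mem_shiftSupport_of_pderiv_ne_zero f
    have hg := mem_shiftSupport_of_pderiv_ne_zero g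
    rw [B_eq_sum P (-T) g f _ _ hg hf, B_eq_sum P T f g _ _ hf hg, Finset.sum_comm]
    simp only [map_sum, ← Finset.sum_neg_distrib, summand_skew P h]
    exact Finset.sum_congr rfl fun a _ => Finset.sum_congr rfl fun c _ => Finset.sum_comm

/-- the master-formula λ-bracket is skewsymmetric
(`B_{−T}(g,f) = −S^{−T}(B_T(f,g))` for all `f,g,T`) if and only if skewsymmetry holds on
generators (`P^{ji}_{−T} = −S^{−T}(P^{ij}_T)` for all `i,j,T`). -/
theorem master_skewsymmetric_iff (ℓ D : ℕ) (P : Fin ℓ → Fin ℓ → (Fin D → ℤ) → A ℓ D)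
    (hP : FinSupp P) :
    (∀ (f g : A ℓ D) (T : Fin D → ℤ), B P (-T) g f = - Sh (-T) (B P T f g)) ↔
    (∀ (i j : Fin ℓ) (T : Fin D → ℤ), P j i (-T) = - Sh (-T) (P i j T)) :=
  master_skewsymmetric_iff_general ℓ D P

end MPVA
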